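/- arXiv:2110.08867 — 4 statements merged into one kernel-verified Lean document; each statement's English description precedes it below -/
import Mathlib

section
/- For every natural number n there exists a finite open cover U₀, U₁, …, U_{n+2} of the Sorgenfrey plane S × S such that every open shrinking V₀, V₁, …, V_{n+2} of this cover (V_i open in S × S, V_i ⊆ U_i for each i, and ⋃ V_i = S × S) has order at least n + 1, i.e., there exists a point of S × S belonging to at least n + 2 of the sets V_i. Consequently, the Čech covering dimension of the Sorgenfrey plane is infinite. -/
/-- The Sorgenfrey topology on `ℝ`: generated by the half-open intervals `[a, b)`. -/
def sorgenfreyLine : TopologicalSpace ℝ :=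
  TopologicalSpace.generateFrom {s : Set ℝ | ∃ a b : ℝ, s = Set.Ico a b}

/-- The Sorgenfrey plane topology on `ℝ × ℝ`: the product of two copies of the
Sorgenfrey topology. -/
def sorgenfreyPlane : TopologicalSpace (ℝ × ℝ) :=
  TopologicalSpace.induced Prod.fst sorgenfreyLine ⊓
    TopologicalSpace.induced Prod.snd sorgenfreyLine

/-- A Bernstein set: both `B` and its complement meet every uncountable closed
(in the Euclidean topology) subset of `ℝ`. -/
def IsBernstein (B : Set ℝ) : Prop :=
  ∀ C : Set ℝ, IsClosed C → ¬C.Countable → (B ∩ C).Nonempty ∧ (Bᶜ ∩ C).Nonempty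

/-! Partition `ℝ` into `n + 3` pieces `f ⁻¹' {i}` that are translates of each other and are
invariant under translation by the countable dense group `(n + 3)ℤ + ℤ√2`; by Baire's theorem
each piece is then non-meagre in every open interval. Let `U i` consist of the complement of the
antidiagonal `x + y = 0` and of the points `(x, -x)` with `f x = i`; the antidiagonal is closed
and discrete in the Sorgenfrey plane, so `U i` is open. In an open shrinking `V`, every `(x, -x)`
with `f x = i` has a square `[x, x + ε) × [-x, -x + ε)` inside `V i`. Baire's theorem on the
Euclidean line gives a point `x` near which, for every `i` at once, the points with such a square
of a fixed size `r` are dense; picking such points `y i` just left of `x`, the point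
`(x, -x + r / 2)` lies in the square at `(y i, -y i)` of every `i`, hence in every `V i`. -/

open Set Filter Topology

theorem nhds_sorgenfreyLine (x : ℝ) : @nhds ℝ sorgenfreyLine x = 𝓝[≥] x := by
  rw [sorgenfreyLine, TopologicalSpace.nhds_generateFrom]
  refine le_antisymm ?_ ?_
  · refine (nhdsGE_basis_Ico x).ge_iff.2 fun b hb => ?_
    exact mem_iInf_of_mem (Ico x b) (mem_iInf_of_mem ⟨left_mem_Ico.2 hb, x, b, rfl⟩
      (mem_principal_self _))
  · refine le_iInf₂ fun s ⟨hxs, a, b, hs⟩ => le_principal_iff.2 ?_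
    subst hs
    exact Ico_mem_nhdsGE_of_mem hxs

theorem nhds_sorgenfreyPlane (p : ℝ × ℝ) :
    @nhds _ sorgenfreyPlane p = 𝓝[≥] p.1 ×ˢ 𝓝[≥] p.2 := by
  rw [sorgenfreyPlane, nhds_inf (t₁ := .induced Prod.fst sorgenfreyLine)
    (t₂ := .induced Prod.snd sorgenfreyLine), @nhds_induced _ _ sorgenfreyLine,
    @nhds_induced _ _ sorgenfreyLine, nhds_sorgenfreyLine, nhds_sorgenfreyLine, prod_eq_inf]

def sorgenfreySquare (p : ℝ × ℝ) (ε : ℝ) : Set (ℝ × ℝ) :=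
  Ico p.1 (p.1 + ε) ×ˢ Ico p.2 (p.2 + ε)

theorem sorgenfreySquare_mono (p : ℝ × ℝ) {ε δ : ℝ} (h : ε ≤ δ) :
    sorgenfreySquare p ε ⊆ sorgenfreySquare p δ :=
  prod_mono (Ico_subset_Ico_right (by linarith)) (Ico_subset_Ico_right (by linarith))

theorem nhdsGE_basis_Ico_add (x : ℝ) :
    (𝓝[≥] x).HasBasis (fun ε : ℝ => 0 < ε) (fun ε => Ico x (x + ε)) :=
  (nhdsGE_basis_Ico x).to_hasBasis (fun u hu => ⟨u - x, sub_pos.2 hu, by simp⟩)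
    fun ε hε => ⟨x + ε, by linarith, subset_rfl⟩

theorem nhds_sorgenfreyPlane_basis (p : ℝ × ℝ) :
    (@nhds _ sorgenfreyPlane p).HasBasis (fun ε : ℝ => 0 < ε) (sorgenfreySquare p) := by
  have hmono (x : ℝ) : MonotoneOn (fun ε => Ico x (x + ε)) {ε | 0 < ε} :=
    fun _ _ _ _ h => Ico_subset_Ico_right (by linarith)
  rw [nhds_sorgenfreyPlane]
  exact (nhdsGE_basis_Ico_add p.1).prod_same_index_mono (nhdsGE_basis_Ico_add p.2)
    (hmono p.1) (hmono p.2)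

theorem isOpen_sorgenfreyPlane_iff {S : Set (ℝ × ℝ)} :
    sorgenfreyPlane.IsOpen S ↔ ∀ p ∈ S, ∃ ε > 0, sorgenfreySquare p ε ⊆ S :=
  (@isOpen_iff_mem_nhds _ sorgenfreyPlane S).trans
    (forall₂_congr fun p _ => (nhds_sorgenfreyPlane_basis p).mem_iff)

section Antidiagonal

variable {ι : Type*}

def antidiagonalCover (f : ℝ → ι) (i : ι) : Set (ℝ × ℝ) :=
  {p | p.1 + p.2 = 0 → f p.1 = i}

theorem isOpen_antidiagonalCover (f : ℝ → ι) (i : ι) :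
    sorgenfreyPlane.IsOpen (antidiagonalCover f i) := by
  refine isOpen_sorgenfreyPlane_iff.2 fun p hp => ?_
  rcases lt_or_ge (p.1 + p.2) 0 with hneg | hnonneg
  · refine ⟨-(p.1 + p.2) / 2, by linarith, ?_⟩
    rintro q ⟨⟨-, hq₁⟩, -, hq₂⟩ hq
    linarith
  · refine ⟨1, one_pos, ?_⟩
    rintro q ⟨⟨hq₁, -⟩, hq₂, -⟩ hq
    have hqp : q.1 = p.1 := by linarith
    rw [hqp]
    exact hp (by linarith)

theorem iUnion_antidiagonalCover (f : ℝ → ι) : ⋃ i, antidiagonalCover f i = univ :=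
  eq_univ_of_forall fun p => mem_iUnion.2 ⟨f p.1, fun _ => rfl⟩

theorem mem_of_antidiagonalCover_shrinking {f : ℝ → ι} {V : ι → Set (ℝ × ℝ)}
    (hVU : ∀ i, V i ⊆ antidiagonalCover f i) (hV : ⋃ i, V i = univ) (x : ℝ) :
    (x, -x) ∈ V (f x) := by
  obtain ⟨j, hj⟩ := mem_iUnion.1 (hV ▸ mem_univ (x, -x))
  obtain rfl : f x = j := hVU j hj (add_neg_cancel x)
  exact hj

end Antidiagonal

section Baire

variable {X : Type*} [TopologicalSpace X]

def IsEverywhereNonmeagre (s : Set X) : Prop :=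
  ∀ O, IsOpen O → O.Nonempty → ¬IsMeagre (s ∩ O)

theorem IsEverywhereNonmeagre.dense_iUnion_interior_closure {ι : Type*} [Countable ι]
    {s : Set X} (hs : IsEverywhereNonmeagre s) {A : ι → Set X} (hA : s ⊆ ⋃ k, A k) :
    Dense (⋃ k, interior (closure (A k))) := by
  refine dense_iff_inter_open.2 fun O hO hne => ?_
  by_contra hdisj
  have hnwd (k : ι) : IsNowhereDense (A k ∩ O) :=
    isNowhereDense_iff_forall_notMem_nhds.2 fun x hx hcl => hdisj ⟨x, hx.2, mem_iUnion.2
      ⟨k, mem_interior_iff_mem_nhds.2 (mem_of_superset hcl (closure_mono inter_subset_left))⟩⟩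
  refine hs O hO hne ((isMeagre_iUnion fun k => (hnwd k).isMeagre).mono ?_)
  rintro x ⟨hxs, hxO⟩
  obtain ⟨k, hk⟩ := mem_iUnion.1 (hA hxs)
  exact mem_iUnion.2 ⟨k, hk, hxO⟩

theorem inter_Ioo_nonempty_of_mem_interior_closure {α : Type*} [TopologicalSpace α]
    [LinearOrder α] [OrderTopology α] [DenselyOrdered α] {A : Set α} {a x : α}
    (hx : x ∈ interior (closure A)) (hax : a < x) : (A ∩ Ioo a x).Nonempty := by
  rw [← closure_inter_open_nonempty_iff isOpen_Ioo]
  have : (𝓝[<] x).NeBot := nhdsLT_neBot_of_exists_lt ⟨a, hax⟩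
  exact nonempty_of_mem (inter_mem (mem_nhdsWithin_of_mem_nhds (mem_interior_iff_mem_nhds.1 hx))
    (Ioo_mem_nhdsLT hax))

theorem isEverywhereNonmeagre_preimage_singleton {G ι : Type*} [AddCommGroup G]
    [TopologicalSpace G] [IsTopologicalAddGroup G] [BaireSpace G] [Countable ι] {φ : G → ι}
    {H : Set G} (hHc : H.Countable) (hHd : Dense H) (hφH : ∀ x, ∀ h ∈ H, φ (x + h) = φ x)
    (hφ : ∀ i j, ∃ g, ∀ x, φ x = i → φ (x + g) = j) (i : ι) :
    IsEverywhereNonmeagre (φ ⁻¹' {i}) := by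
  intro O hO ⟨o, ho⟩ hmeagre
  have : Countable H := hHc.to_subtype
  have hfiber : IsMeagre (φ ⁻¹' {i}) := by
    refine (isMeagre_iUnion fun h : H => hmeagre.preimage_of_isOpenMap
      (continuous_sub_right (h : G)) (isOpenMap_sub_right (h : G))).mono fun x hx => ?_
    obtain ⟨h, hH, hxh⟩ := hHd.exists_mem_open (hO.preimage (continuous_sub_left x))
      ⟨x - o, by simpa using ho⟩
    refine mem_iUnion.2 ⟨⟨h, hH⟩, ?_, hxh⟩
    rw [mem_preimage, ← hφH (x - h) h hH, sub_add_cancel]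
    exact hx
  have hall (j : ι) : IsMeagre (φ ⁻¹' {j}) := by
    obtain ⟨g, hg⟩ := hφ j i
    exact (hfiber.preimage_of_isOpenMap (continuous_add_const g) (isOpenMap_add_right g)).mono
      fun x hx => hg x hx
  exact not_isMeagre_of_isOpen isOpen_univ univ_nonempty
    ((isMeagre_iUnion hall).mono fun x _ => mem_iUnion.2 ⟨φ x, rfl⟩)

end Baire

section EquivariantExtension

variable {Z A M : Type*} [AddGroup Z] [AddCommGroup A] [AddMonoid M]

theorem exists_apply_eq_sub_out (ι : Z →+ A) (x : A) :
    ∃ z, ι z = x - (x : A ⧸ ι.range).out := by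
  obtain ⟨⟨_, z, hz⟩, hout⟩ := QuotientAddGroup.mk_out_eq_add ι.range x
  exact ⟨-z, by rw [hout, sub_add_cancel_left, map_neg, hz]⟩

noncomputable def equivariantExtension (ι : Z →+ A) (ψ : Z →+ M) (x : A) : M :=
  ψ (exists_apply_eq_sub_out ι x).choose

theorem equivariantExtension_add_apply {ι : Z →+ A} (hι : Function.Injective ι) (ψ : Z →+ M)
    (x : A) (z : Z) :
    equivariantExtension ι ψ (x + ι z) = equivariantExtension ι ψ x + ψ z := by
  have hout : ((x + ι z : A) : A ⧸ ι.range).out = (x : A ⧸ ι.range).out := by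
    rw [QuotientAddGroup.mk_add_of_mem x (AddMonoidHom.mem_range.2 ⟨z, rfl⟩)]
  rw [equivariantExtension, equivariantExtension, ← map_add]
  congr 1
  apply hι
  rw [map_add, (exists_apply_eq_sub_out ι _).choose_spec,
    (exists_apply_eq_sub_out ι _).choose_spec, hout]
  abel

end EquivariantExtension

instance Zsqrtd.instCountable (d : ℤ) : Countable (ℤ√d) :=
  Function.Injective.countable (f := fun z : ℤ√d => (z.re, z.im))
    fun _ _ h => Zsqrtd.ext_iff.2 (Prod.ext_iff.1 h)

theorem exists_zmod_isEverywhereNonmeagre_fibers (m : ℕ) [NeZero m] :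
    ∃ φ : ℝ → ZMod m, ∀ i, IsEverywhereNonmeagre (φ ⁻¹' {i}) := by
  set ι : ℤ√2 →+ ℝ := (Zsqrtd.toReal (d := 2) zero_le_two).toAddMonoidHom with hι_def
  have hι : Function.Injective ι :=
    Zsqrtd.toReal_injective zero_le_two fun n h => Int.sq_ne_two_mod_four n (h ▸ rfl)
  set ψ : ℤ√2 →+ ZMod m :=
    (Int.castAddHom (ZMod m)).comp (AddMonoidHom.mk' Zsqrtd.re Zsqrtd.re_add)
  have hψ (z : ℤ√2) : ψ z = z.re := rfl
  refine ⟨equivariantExtension ι ψ, isEverywhereNonmeagre_preimage_singleton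
    (H := (ψ.ker.map ι : Set ℝ)) ?_ ?_ ?_ ?_⟩
  · exact (countable_range ι).mono (by rintro _ ⟨z, -, rfl⟩; exact mem_range_self z)
  · refine (dense_addSubgroupClosure_pair_iff.2
      (irrational_sqrt_two.div_natCast (NeZero.ne m))).mono ?_
    refine (AddSubgroup.closure_le _).2
      (pair_subset ⟨⟨0, 1⟩, ?_, ?_⟩ ⟨⟨m, 0⟩, ?_, ?_⟩) <;> simp [hψ, hι_def]
  · rintro x _ ⟨z, hz, rfl⟩
    rw [equivariantExtension_add_apply hι, AddMonoidHom.mem_ker.1 hz, add_zero]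
  · intro i j
    obtain ⟨k, hk⟩ := ZMod.intCast_surjective (j - i)
    refine ⟨ι ⟨k, 0⟩, fun x hx => ?_⟩
    rw [equivariantExtension_add_apply hι, hx, hψ, hk, add_sub_cancel]

theorem exists_isEverywhereNonmeagre_fibers (ι : Type*) [Finite ι] [Nonempty ι] :
    ∃ φ : ℝ → ι, ∀ i, IsEverywhereNonmeagre (φ ⁻¹' {i}) := by
  obtain ⟨φ, hφ⟩ := exists_zmod_isEverywhereNonmeagre_fibers (Nat.card ι)
  let e : ZMod (Nat.card ι) ≃ ι :=
    (ZMod.finEquiv _).toEquiv.symm.trans (Finite.equivFin ι).symm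
  refine ⟨e ∘ φ, fun i => ?_⟩
  convert hφ (e.symm i) using 1
  ext x
  simp [← Equiv.eq_symm_apply]

theorem mem_sorgenfreySquare_of_mem_Ioo {x y r : ℝ} (hy : y ∈ Ioo (x - r / 2) x) :
    (x, -x + r / 2) ∈ sorgenfreySquare (y, -y) r := by
  obtain ⟨h₁, h₂⟩ := hy
  exact ⟨⟨by linarith, by linarith⟩, by linarith, by linarith⟩

theorem exists_forall_mem_of_antidiagonalCover_shrinking {ι : Type*} [Finite ι] {f : ℝ → ι}
    (hf : ∀ i, IsEverywhereNonmeagre (f ⁻¹' {i})) {V : ι → Set (ℝ × ℝ)}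
    (hVo : ∀ i, sorgenfreyPlane.IsOpen (V i)) (hVU : ∀ i, V i ⊆ antidiagonalCover f i)
    (hV : ⋃ i, V i = univ) : ∃ p, ∀ i, p ∈ V i := by
  set A : ι → ℕ → Set ℝ := fun i k => {x | sorgenfreySquare (x, -x) (1 / (k + 1)) ⊆ V i}
  have hA_mono (i : ι) : Monotone (A i) := fun k l hkl x hx =>
    (sorgenfreySquare_mono _ (Nat.one_div_le_one_div hkl)).trans hx
  have hfA (i : ι) : f ⁻¹' {i} ⊆ ⋃ k, A i k := by
    rintro x rfl
    obtain ⟨ε, hε, hsq⟩ := isOpen_sorgenfreyPlane_iff.1 (hVo _) _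
      (mem_of_antidiagonalCover_shrinking hVU hV x)
    obtain ⟨k, hk⟩ := exists_nat_one_div_lt hε
    exact mem_iUnion.2 ⟨k, (sorgenfreySquare_mono _ hk.le).trans hsq⟩
  obtain ⟨x, hx⟩ := (dense_iInter_of_isOpen (fun i => isOpen_iUnion fun k => isOpen_interior)
    fun i => (hf i).dense_iUnion_interior_closure (hfA i)).nonempty
  choose k hk using fun i => mem_iUnion.1 (mem_iInter.1 hx i)
  obtain ⟨K, hK⟩ := Finite.exists_le k
  have hr : (0 : ℝ) < 1 / (K + 1) := Nat.one_div_pos_of_nat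
  choose y hyA hyI using fun i => inter_Ioo_nonempty_of_mem_interior_closure
    (interior_mono (closure_mono (hA_mono i (hK i))) (hk i)) (sub_lt_self x (half_pos hr))
  exact ⟨(x, -x + 1 / (K + 1) / 2), fun i => hyA i (mem_sorgenfreySquare_of_mem_Ioo (hyI i))⟩

/-- For every `n` there is a finite open cover `U₀, …, U_{n+2}` of the Sorgenfrey plane
such that every open shrinking of it has order at least `n + 1`: some point lies in at
least `n + 2` of the sets of the shrinking. Hence the Čech covering dimension of the
Sorgenfrey plane is infinite. -/
theorem sorgenfrey_plane_cover_without_small_shrinking (n : ℕ) :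
    ∃ U : Fin (n + 3) → Set (ℝ × ℝ),
      (∀ i, sorgenfreyPlane.IsOpen (U i)) ∧
      (⋃ i, U i) = Set.univ ∧
      ∀ V : Fin (n + 3) → Set (ℝ × ℝ),
        (∀ i, sorgenfreyPlane.IsOpen (V i)) →
        (∀ i, V i ⊆ U i) →
        (⋃ i, V i) = Set.univ →
        ∃ p : ℝ × ℝ, ∃ I : Finset (Fin (n + 3)),
          n + 2 ≤ I.card ∧ ∀ i ∈ I, p ∈ V i := by
  obtain ⟨f, hf⟩ := exists_isEverywhereNonmeagre_fibers (Fin (n + 3))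
  refine ⟨antidiagonalCover f, isOpen_antidiagonalCover f, iUnion_antidiagonalCover f,
    fun V hVo hVU hV => ?_⟩
  obtain ⟨p, hp⟩ := exists_forall_mem_of_antidiagonalCover_shrinking hf hVo hVU hV
  exact ⟨p, Finset.univ, by simp, fun i _ => hp i⟩
end

section
/- Let n be a natural number and let B₁, …, B_{n+2} be pairwise disjoint Bernstein subsets of ℝ whose union is ℝ. Define subsets of the Sorgenfrey plane S × S by U₀ = {(x, y) : y < −x} and U_i = ⋃_{x ∈ B_i} [x, ∞) × [−x, ∞) for 1 ≤ i ≤ n + 2. Then {U₀, U₁, …, U_{n+2}} is an open cover of S × S, and for every open shrinking {V₀, V₁, …, V_{n+2}} of this cover there exists a point of S × S belonging simultaneously to all of V₁, …, V_{n+2}. -/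
/-!
In an open shrinking `V`, the antidiagonal point `(t, -t)` with `t ∈ Bᵢ` lies in no `Uⱼ` other
than `U_{i+1}`, so `V_{i+1}` contains a half-open square of some side `eᵢ t` at it. Since `Bᵢ`
meets every uncountable closed set, for all but countably many `x` there is a `c > 0` such that
`x` is a limit of points `t ∈ Bᵢ` with `c < eᵢ t`, simultaneously for the finitely many `i`.
Taking such `tᵢ` within `c / 4` of `x`, the point `(x + c / 4, -x + c / 4)` lies in all these
squares.
-/

open Set Filter Topology TopologicalSpace

theorem not_countable_nat_bool : ¬Countable (ℕ → Bool) := by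
  rw [← Cardinal.mk_le_aleph0_iff, Cardinal.mk_arrow]
  simpa using Cardinal.aleph0_lt_continuum

/-- The perfect set property of Borel sets: a Borel set is made closed by a finer Polish topology,
where it contains a Cantor set, which is still compact in the original topology. -/
theorem MeasurableSet.exists_isCompact_subset_not_countable {α : Type*} [TopologicalSpace α]
    [PolishSpace α] [MeasurableSpace α] [BorelSpace α] {s : Set α} (hs : MeasurableSet s)
    (hunc : ¬s.Countable) : ∃ K ⊆ s, IsCompact K ∧ ¬K.Countable := by
  obtain ⟨f, hfs, hfc, hfi⟩ : ∃ f : (ℕ → Bool) → α, range f ⊆ s ∧ Continuous f ∧ f.Injective := by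
    obtain ⟨t', ht', _, hclosed, -⟩ := hs.isClopenable
    obtain ⟨f, hfs, hfc, hfi⟩ := hclosed.exists_nat_bool_injection_of_not_countable hunc
    exact ⟨f, hfs, continuous_le_rng ht' hfc, hfi⟩
  refine ⟨range f, hfs, isCompact_range hfc, fun hcount => not_countable_nat_bool ?_⟩
  exact countable_univ_iff.1 ((mapsTo_range f univ).countable_of_injOn hfi.injOn hcount)

theorem IsBernstein.countable_of_measurableSet_of_disjoint {B s : Set ℝ} (hB : IsBernstein B)
    (hs : MeasurableSet s) (hBs : Disjoint B s) : s.Countable := by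
  by_contra hunc
  obtain ⟨K, hKs, hK, hKunc⟩ := hs.exists_isCompact_subset_not_countable hunc
  obtain ⟨t, htB, htK⟩ := (hB K hK.isClosed hKunc).1
  exact hBs.notMem_of_mem_left htB (hKs htK)

/-- The exceptional set lies in the Gδ set `⋂ₖ (closure {t ∈ B | 1/(k+1) < e t})ᶜ`, which misses
`B` and is therefore countable. -/
theorem IsBernstein.countable_setOf_not_eventually_mem_closure {B : Set ℝ} (hB : IsBernstein B)
    (e : ℝ → ℝ) (he : ∀ t ∈ B, 0 < e t) :
    {x | ∀ᶠ c in 𝓝[>] 0, x ∈ closure {t ∈ B | c < e t}}ᶜ.Countable := by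
  set S : ℕ → Set ℝ := fun k => {t ∈ B | 1 / ((k : ℝ) + 1) < e t}
  have hS : B ⊆ ⋃ k, S k := fun t ht =>
    mem_iUnion.2 ((exists_nat_one_div_lt (he t ht)).imp fun _ hk => ⟨ht, hk⟩)
  have hG : MeasurableSet (⋂ k, (closure (S k))ᶜ) :=
    (IsGδ.iInter_of_isOpen fun _ => isClosed_closure.isOpen_compl).measurableSet
  refine (hB.countable_of_measurableSet_of_disjoint hG ?_).mono ?_
  · refine disjoint_left.2 fun t ht htG => ?_
    obtain ⟨k, hk⟩ := mem_iUnion.1 (hS ht)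
    exact mem_iInter.1 htG k (subset_closure hk)
  · intro x hx
    refine mem_iInter.2 fun k hxk => hx ?_
    filter_upwards [Ioo_mem_nhdsGT (Nat.one_div_pos_of_nat (n := k))] with c hc
    refine closure_mono ?_ hxk
    exact fun t ht => ⟨ht.1, hc.2.trans ht.2⟩

theorem sorgenfreyLine_isTopologicalBasis :
    IsTopologicalBasis (t := sorgenfreyLine) {s | ∃ a b : ℝ, s = Ico a b} := by
  refine @IsTopologicalBasis.mk ℝ sorgenfreyLine _ ?_
    (eq_univ_of_forall fun x => mem_sUnion.2 ⟨Ico x (x + 1), ⟨x, x + 1, rfl⟩, by simp⟩) rfl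
  rintro _ ⟨a, b, rfl⟩ _ ⟨c, d, rfl⟩ x hx
  exact ⟨_, ⟨max a c, min b d, rfl⟩, by rwa [Ico_inter_Ico] at hx, Ico_inter_Ico.ge⟩

theorem sorgenfreyLine_isOpen_Ico (a b : ℝ) : IsOpen[sorgenfreyLine] (Ico a b) :=
  isOpen_generateFrom_of_mem ⟨a, b, rfl⟩

theorem sorgenfreyLine_le : sorgenfreyLine ≤ (inferInstance : TopologicalSpace ℝ) := by
  refine fun s (hs : IsOpen s) =>
    (sorgenfreyLine_isTopologicalBasis.isOpen_iff (t := sorgenfreyLine)).2 fun a ha => ?_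
  obtain ⟨b, hab, hbs⟩ := exists_Ico_subset_of_mem_nhds (IsOpen.mem_nhds hs ha) (exists_gt a)
  exact ⟨_, ⟨a, b, rfl⟩, left_mem_Ico.2 hab, hbs⟩

theorem sorgenfreyPlane_le : sorgenfreyPlane ≤ (inferInstance : TopologicalSpace (ℝ × ℝ)) :=
  inf_le_inf (induced_mono sorgenfreyLine_le) (induced_mono sorgenfreyLine_le)

theorem sorgenfreyPlane_exists_Ico_prod_Ico_subset {s : Set (ℝ × ℝ)}
    (hs : IsOpen[sorgenfreyPlane] s) {p : ℝ × ℝ} (hp : p ∈ s) :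
    ∃ ε > 0, Ico p.1 (p.1 + ε) ×ˢ Ico p.2 (p.2 + ε) ⊆ s := by
  have hbasis := sorgenfreyLine_isTopologicalBasis.inf_induced sorgenfreyLine_isTopologicalBasis
    Prod.fst Prod.snd (t := sorgenfreyLine) (s := sorgenfreyLine)
  obtain ⟨_, ⟨_, ⟨a, b, rfl⟩, _, ⟨c, d, rfl⟩, rfl⟩, ⟨hp₁, hp₂⟩, hsub⟩ :=
    (hbasis.isOpen_iff (t := sorgenfreyPlane)).1 hs p hp
  refine ⟨min (b - p.1) (d - p.2), lt_min (by linarith [hp₁.2]) (by linarith [hp₂.2]), ?_⟩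
  refine (prod_mono (Ico_subset_Ico hp₁.1 ?_) (Ico_subset_Ico hp₂.1 ?_)).trans hsub <;>
    linarith [min_le_left (b - p.1) (d - p.2), min_le_right (b - p.1) (d - p.2)]

theorem IsUpperSet.sorgenfreyPlane_isOpen {s : Set (ℝ × ℝ)} (hs : IsUpperSet s) :
    IsOpen[sorgenfreyPlane] s := by
  let := sorgenfreyLine
  refine isOpen_iff_forall_mem_open.2 fun p hp => ⟨Ico p.1 (p.1 + 1) ×ˢ Ico p.2 (p.2 + 1), ?_,
    (sorgenfreyLine_isOpen_Ico _ _).prod (sorgenfreyLine_isOpen_Ico _ _), by simp⟩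
  rintro q ⟨⟨hq₁, -⟩, hq₂, -⟩
  exact hs (show p ≤ q from ⟨hq₁, hq₂⟩) hp

theorem exists_forall_mem_of_forall_mem_antidiagonal {ι : Type*} [Finite ι] {B : ι → Set ℝ}
    (hB : ∀ i, IsBernstein (B i)) {W : ι → Set (ℝ × ℝ)} (hW : ∀ i, IsOpen[sorgenfreyPlane] (W i))
    (hBW : ∀ i, ∀ t ∈ B i, (t, -t) ∈ W i) : ∃ p, ∀ i, p ∈ W i := by
  choose! e he hsub using fun i t (ht : t ∈ B i) =>
    sorgenfreyPlane_exists_Ico_prod_Ico_subset (hW i) (hBW i t ht)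
  have hcount := countable_iUnion fun i => (hB i).countable_setOf_not_eventually_mem_closure
    (e i) (he i)
  obtain ⟨x, hx⟩ :=
    (ne_univ_iff_exists_notMem _).1 fun h => Cardinal.not_countable_real (h ▸ hcount)
  simp only [mem_iUnion, mem_compl_iff, mem_ofPred_eq, not_exists, not_not] at hx
  obtain ⟨c, hxc, hc : 0 < c⟩ := ((eventually_all.2 hx).and self_mem_nhdsWithin).exists
  choose t ht hdist using fun i => Metric.mem_closure_iff.1 (hxc i) (c / 4) (by positivity)
  refine ⟨(x + c / 4, -x + c / 4), fun i => hsub i (t i) (ht i).1 ?_⟩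
  have hxt := abs_sub_lt_iff.1 (hdist i)
  have hce := (ht i).2
  simp only [mem_prod, mem_Ico]
  refine ⟨⟨?_, ?_⟩, ?_, ?_⟩ <;> linarith

theorem antidiagonal_mem_iUnion_Ici_prod_Ici {A : Set ℝ} {t : ℝ} :
    (t, -t) ∈ ⋃ x ∈ A, Ici x ×ˢ Ici (-x) ↔ t ∈ A := by
  simp only [mem_iUnion, mem_prod, mem_Ici, neg_le_neg_iff, exists_prop]
  exact ⟨fun ⟨x, hx, hxt, htx⟩ => le_antisymm htx hxt ▸ hx, fun ht => ⟨t, ht, le_rfl, le_rfl⟩⟩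

/-- Given pairwise disjoint Bernstein sets `B₁, …, B_{n+2}` covering `ℝ`, the family
`U₀ = {(x,y) : y < -x}`, `U_i = ⋃_{x ∈ Bᵢ} [x,∞) × [-x,∞)` is an open cover of the
Sorgenfrey plane, and every open shrinking `V₀, …, V_{n+2}` of it has a point lying in
all of `V₁, …, V_{n+2}` simultaneously. -/
theorem sorgenfrey_plane_bernstein_cover (n : ℕ) (B : Fin (n + 2) → Set ℝ)
    (hdisj : Pairwise (Function.onFun Disjoint B))
    (hBern : ∀ i, IsBernstein (B i))
    (hBcover : (⋃ i, B i) = Set.univ)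
    (U : Fin (n + 3) → Set (ℝ × ℝ))
    (hU0 : U 0 = {p : ℝ × ℝ | p.2 < -p.1})
    (hUi : ∀ i : Fin (n + 2), U i.succ = ⋃ x ∈ B i, Set.Ici x ×ˢ Set.Ici (-x)) :
    (∀ i, sorgenfreyPlane.IsOpen (U i)) ∧
    (⋃ i, U i) = Set.univ ∧
    ∀ V : Fin (n + 3) → Set (ℝ × ℝ),
      (∀ i, sorgenfreyPlane.IsOpen (V i)) →
      (∀ i, V i ⊆ U i) →
      (⋃ i, V i) = Set.univ →
      ∃ p : ℝ × ℝ, ∀ i : Fin (n + 2), p ∈ V i.succ := by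
  refine ⟨fun j => ?_, eq_univ_of_forall fun p => ?_, fun V hVopen hVU hVcover => ?_⟩
  · cases j using Fin.cases with
    | zero => exact hU0 ▸ sorgenfreyPlane_le _ (isOpen_lt continuous_snd continuous_fst.neg)
    | succ i =>
      refine hUi i ▸ IsUpperSet.sorgenfreyPlane_isOpen (isUpperSet_iUnion₂ fun x _ => ?_)
      exact Ici_prod_Ici x (-x) ▸ isUpperSet_Ici _
  · rcases lt_or_ge p.2 (-p.1) with hp | hp
    · exact mem_iUnion.2 ⟨0, hU0 ▸ hp⟩
    · obtain ⟨i, hi⟩ := mem_iUnion.1 (hBcover ▸ mem_univ p.1)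
      refine mem_iUnion.2 ⟨i.succ, hUi i ▸ mem_iUnion₂.2 ⟨p.1, hi, ?_⟩⟩
      exact ⟨self_mem_Ici, hp⟩
  refine exists_forall_mem_of_forall_mem_antidiagonal hBern (fun i => hVopen i.succ)
    fun i t ht => ?_
  obtain ⟨j, hj⟩ := mem_iUnion.1 (hVcover ▸ mem_univ (t, -t))
  cases j using Fin.cases with
  | zero =>
    have h : (t, -t) ∈ U 0 := hVU 0 hj
    rw [hU0, mem_ofPred_eq] at h
    exact absurd h (lt_irrefl _)
  | succ j =>
    have htj : t ∈ B j := antidiagonal_mem_iUnion_Ici_prod_Ici.1 (hUi j ▸ hVU j.succ hj)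
    obtain rfl : j = i := hdisj.eq (not_disjoint_iff.2 ⟨t, htj, ht⟩)
    exact hj
end

section
/- There exist 2^{ℵ₀} pairwise disjoint Bernstein subsets of ℝ: there is a family (B_ι)_{ι ∈ I} of subsets of ℝ indexed by a set I of cardinality continuum such that the B_ι are pairwise disjoint and each B_ι is a Bernstein set. -/
/-!
There are `𝔠` uncountable closed sets and each of them has `𝔠` points. Listing the pairs
`(r, C)` of a real `r` and an uncountable closed set `C` in order type `𝔠`, transfinite
recursion picks for each pair a point of `C` different from all points picked before, since
fewer than `𝔠` have been. The points picked for pairs with first coordinate `r` form a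
Bernstein set `B r`: it meets every `C` through the pair `(r, C)`, and its complement meets
`C` through the point picked for `(r + 1, C)`.
-/

open Cardinal Set Function TopologicalSpace

universe u

theorem exists_injective_forall_mem_of_mk_Iio_lt {ι α : Type u} [LinearOrder ι] [WellFoundedLT ι]
    {S : ι → Set α} (h : ∀ i, #(Iio i) < #(S i)) :
    ∃ f : ι → α, Injective f ∧ ∀ i, f i ∈ S i := by
  have fresh : ∀ i (g : Iio i → α), ∃ x ∈ S i, x ∉ range g := fun i g =>
    not_subset.mp fun hsub => ((mk_le_mk_of_subset hsub).trans mk_range_le).not_gt (h i)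
  choose pick pick_mem pick_fresh using fresh
  let f : ι → α := WellFoundedLT.fix fun i ih => pick i fun j => ih j j.2
  have hf : ∀ i, f i = pick i fun j => f j := WellFoundedLT.fix_eq _
  refine ⟨f, Injective.of_lt_imp_ne fun j i hji hfji => ?_, fun i => hf i ▸ pick_mem i _⟩
  exact pick_fresh i (fun j => f j) (hf i ▸ ⟨⟨j, hji⟩, hfji⟩)

theorem exists_injective_forall_mem {ι α : Type u} {S : ι → Set α} (h : ∀ i, #ι ≤ #(S i)) :
    ∃ f : ι → α, Injective f ∧ ∀ i, f i ∈ S i := by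
  obtain ⟨_, _, hord⟩ := exists_ord_eq_type_lt ι
  exact exists_injective_forall_mem_of_mk_Iio_lt fun i => (mk_Iio_lt i hord).trans_le (h i)

theorem IsClosed.continuum_le_mk {α : Type*} [TopologicalSpace α] [PolishSpace α] {C : Set α}
    (hC : IsClosed C) (hunc : ¬C.Countable) : 𝔠 ≤ #C := by
  obtain ⟨f, hfC, -, hf⟩ := hC.exists_nat_bool_injection_of_not_countable hunc
  have := mk_le_mk_of_subset hfC
  rw [← lift_le.{0}, mk_range_eq_of_injective hf] at this
  simpa using this

theorem mk_setOf_isClosed_le_continuum (α : Type*) [TopologicalSpace α]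
    [SecondCountableTopology α] : #{C : Set α // IsClosed C} ≤ 𝔠 := by
  have hb := isBasis_countableBasis α
  let basicOpensIn (C : {C : Set α // IsClosed C}) : 𝒫 countableBasis α :=
    ⟨{s ∈ countableBasis α | s ⊆ C.1ᶜ}, sep_subset _ _⟩
  have hinj : Injective basicOpensIn := fun C D hCD =>
    Subtype.ext <| compl_injective <| by
      rw [hb.open_eq_sUnion' C.2.isOpen_compl, hb.open_eq_sUnion' D.2.isOpen_compl]
      exact congrArg (fun t : 𝒫 countableBasis α => ⋃₀ t.1) hCD
  calc #{C : Set α // IsClosed C} ≤ #(𝒫 countableBasis α) := mk_le_of_injective hinj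
    _ = 2 ^ #(countableBasis α) := mk_powerset _
    _ ≤ 𝔠 := power_le_power_left two_ne_zero (countable_countableBasis α).le_aleph0

/-- There exist continuum many pairwise disjoint Bernstein subsets of `ℝ`. -/
theorem exists_continuum_disjoint_bernstein_sets :
    ∃ (I : Type) (B : I → Set ℝ),
      Cardinal.mk I = Cardinal.continuum ∧
      Pairwise (Function.onFun Disjoint B) ∧
      ∀ ι : I, IsBernstein (B ι) := by
  let UncountableClosed := {C : Set ℝ // IsClosed C ∧ ¬C.Countable}
  have hcard : #(ℝ × UncountableClosed) ≤ 𝔠 := calc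
    #(ℝ × UncountableClosed) = #ℝ * #UncountableClosed := by rw [mk_prod, lift_id, lift_id]
    _ ≤ 𝔠 * 𝔠 := mul_le_mul' mk_real.le
      ((mk_subtype_mono fun _ h => h.1).trans (mk_setOf_isClosed_le_continuum ℝ))
    _ = 𝔠 := continuum_mul_self
  obtain ⟨f, hf, hf_mem⟩ :=
    exists_injective_forall_mem (S := fun p : ℝ × UncountableClosed => p.2.1) fun p =>
      hcard.trans (p.2.2.1.continuum_le_mk p.2.2.2)
  refine ⟨ℝ, fun r => f '' {p | p.1 = r}, mk_real, fun r s hrs => ?_, fun r C hC hunc => ?_⟩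
  · rw [onFun, disjoint_image_iff hf, disjoint_left]
    rintro p rfl rfl
    exact hrs rfl
  · let C' : UncountableClosed := ⟨C, hC, hunc⟩
    refine ⟨⟨f (r, C'), mem_image_of_mem f rfl, hf_mem (r, C')⟩,
      ⟨f (r + 1, C'), ?_, hf_mem (r + 1, C')⟩⟩
    rintro ⟨p, hp, hfp⟩
    rw [hf hfp] at hp
    exact (lt_add_one r).ne' hp
end

section
/- Let n be a natural number, let B₁, …, B_{n+2} be pairwise disjoint subsets of ℝ with union ℝ, and define U₀ = {(x, y) : y < −x} and U_i = ⋃_{x ∈ B_i} [x, ∞) × [−x, ∞) for 1 ≤ i ≤ n + 2, viewed as subsets of the Sorgenfrey plane S × S. Let D = {(x, −x) : x ∈ ℝ} be the antidiagonal. Then: (i) U_i ⊆ {(x, y) : y ≥ −x} for every i ≥ 1, so U₀ is disjoint from every U_i with i ≥ 1; (ii) U_i ∩ D = {(x, −x) : x ∈ B_i} for every i ≥ 1; and (iii) every shrinking {V₀, V₁, …, V_{n+2}} of the cover {U₀, U₁, …, U_{n+2}} satisfies V₀ = U₀ and V_i ∩ D = {(x, −x) : x ∈ B_i} for every i ≥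 1. -/
/-!
Every `Uᵢ` with `i ≥ 1` is a union of closed quadrants with corner `(x, -x)` on the antidiagonal,
so it lies on or above the antidiagonal, and it meets the antidiagonal exactly in the corners
`(x, -x)`, `x ∈ Bᵢ`. Hence each point of `U₀`, and each antidiagonal point `(x, -x)` with
`x ∈ Bᵢ`, lies in exactly one member of the cover, so every shrinking must keep it in that member.
-/

open Set

namespace Set

theorem mem_of_iUnion_eq_univ_of_forall_ne_notMem {ι X : Type*} {U V : ι → Set X}
    (hVU : ∀ i, V i ⊆ U i) (hV : ⋃ i, V i = univ) {p : X} {i : ι}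
    (hp : ∀ j ≠ i, p ∉ U j) : p ∈ V i := by
  obtain ⟨j, hj⟩ := mem_iUnion.1 (hV ▸ mem_univ p)
  by_cases hji : j = i
  · exact hji ▸ hj
  · exact absurd (hVU j hj) (hp j hji)

end Set

theorem disjoint_lt_neg_le_neg {α : Type*} [Neg α] [LinearOrder α] :
    Disjoint {p : α × α | p.2 < -p.1} {p | -p.1 ≤ p.2} :=
  disjoint_left.2 fun _ hlt hle => not_le.2 hlt hle

section Quadrants

variable {α : Type*} [AddCommGroup α] [LinearOrder α] [IsOrderedAddMonoid α]

theorem biUnion_Ici_prod_Ici_neg_subset (s : Set α) :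
    ⋃ x ∈ s, Ici x ×ˢ Ici (-x) ⊆ {p : α × α | -p.1 ≤ p.2} := by
  simp only [subset_def, mem_iUnion, mem_prod, mem_Ici, mem_ofPred_eq]
  rintro p ⟨x, -, hx₁, hx₂⟩
  exact (neg_le_neg hx₁).trans hx₂

theorem mk_neg_mem_biUnion_Ici_prod_Ici_neg_iff {s : Set α} {x : α} :
    (x, -x) ∈ ⋃ y ∈ s, Ici y ×ˢ Ici (-y) ↔ x ∈ s := by
  simp only [mem_iUnion, mem_prod, mem_Ici, neg_le_neg_iff, exists_prop]
  constructor
  · rintro ⟨y, hy, hyx, hxy⟩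
    exact le_antisymm hxy hyx ▸ hy
  · exact fun hx => ⟨x, hx, le_rfl, le_rfl⟩

theorem biUnion_Ici_prod_Ici_neg_inter_antidiagonal (s : Set α) :
    (⋃ x ∈ s, Ici x ×ˢ Ici (-x)) ∩ {p : α × α | ∃ x, p = (x, -x)} =
      {p | ∃ x ∈ s, p = (x, -x)} := by
  ext p
  constructor
  · rintro ⟨hp, x, rfl⟩
    exact ⟨x, mk_neg_mem_biUnion_Ici_prod_Ici_neg_iff.1 hp, rfl⟩
  · rintro ⟨x, hx, rfl⟩
    exact ⟨mk_neg_mem_biUnion_Ici_prod_Ici_neg_iff.2 hx, x, rfl⟩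

end Quadrants

theorem bernstein_cover_antidiagonal_trace_general (n : ℕ) (B : Fin (n + 2) → Set ℝ)
    (hdisj : Pairwise (Function.onFun Disjoint B))
    (U : Fin (n + 3) → Set (ℝ × ℝ))
    (hU0 : U 0 = {p : ℝ × ℝ | p.2 < -p.1})
    (hUi : ∀ i : Fin (n + 2), U i.succ = ⋃ x ∈ B i, Set.Ici x ×ˢ Set.Ici (-x))
    (D : Set (ℝ × ℝ)) (hD : D = {p : ℝ × ℝ | ∃ x : ℝ, p = (x, -x)}) :
    (∀ i : Fin (n + 2),
        U i.succ ⊆ {p : ℝ × ℝ | -p.1 ≤ p.2} ∧ Disjoint (U 0) (U i.succ)) ∧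
    (∀ i : Fin (n + 2), U i.succ ∩ D = {p : ℝ × ℝ | ∃ x ∈ B i, p = (x, -x)}) ∧
    (∀ V : Fin (n + 3) → Set (ℝ × ℝ),
        (∀ i, V i ⊆ U i) → (⋃ i, V i) = Set.univ →
        V 0 = U 0 ∧
          ∀ i : Fin (n + 2), V i.succ ∩ D = {p : ℝ × ℝ | ∃ x ∈ B i, p = (x, -x)}) := by
  have hsub (i : Fin (n + 2)) : U i.succ ⊆ {p : ℝ × ℝ | -p.1 ≤ p.2} :=
    hUi i ▸ biUnion_Ici_prod_Ici_neg_subset (B i)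
  have hdisj0 (i : Fin (n + 2)) : Disjoint (U 0) (U i.succ) :=
    hU0 ▸ disjoint_lt_neg_le_neg.mono_right (hsub i)
  have htrace (i : Fin (n + 2)) : U i.succ ∩ D = {p | ∃ x ∈ B i, p = (x, -x)} := by
    rw [hUi i, hD, biUnion_Ici_prod_Ici_neg_inter_antidiagonal]
  refine ⟨fun i => ⟨hsub i, hdisj0 i⟩, htrace, fun V hVU hV => ?_⟩
  have hV0 : V 0 = U 0 := by
    refine (hVU 0).antisymm fun p hp => mem_of_iUnion_eq_univ_of_forall_ne_notMem hVU hV ?_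
    intro j hj
    obtain ⟨k, rfl⟩ := Fin.exists_succ_eq.2 hj
    exact disjoint_left.1 (hdisj0 k) hp
  refine ⟨hV0, fun i => (inter_subset_inter_left D (hVU _)).trans (htrace i).subset |>.antisymm ?_⟩
  rintro _ ⟨x, hx, rfl⟩
  have hxD : (x, -x) ∈ D := hD ▸ ⟨x, rfl⟩
  refine ⟨mem_of_iUnion_eq_univ_of_forall_ne_notMem hVU hV fun j hj hxU => ?_, hxD⟩
  induction j using Fin.cases with
  | zero => exact lt_irrefl (-x) (hU0 ▸ hxU :)
  | succ k =>
    have hk : k ≠ i := fun h => hj (h ▸ rfl)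
    rw [hUi k, mk_neg_mem_biUnion_Ici_prod_Ici_neg_iff] at hxU
    exact disjoint_left.1 (hdisj hk) hxU hx

/-- Combinatorial properties of the cover `U₀ = {(x,y) : y < -x}`,
`Uᵢ = ⋃_{x ∈ Bᵢ} [x,∞) × [-x,∞)` built from a partition `B₁, …, B_{n+2}` of `ℝ`:
(i) each `Uᵢ` (`i ≥ 1`) lies in `{(x,y) : -x ≤ y}` and is disjoint from `U₀`;
(ii) `Uᵢ ∩ D = {(x,-x) : x ∈ Bᵢ}` where `D` is the antidiagonal;
(iii) every shrinking `V₀, …, V_{n+2}` of this cover satisfies `V₀ = U₀` and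
`Vᵢ ∩ D = {(x,-x) : x ∈ Bᵢ}` for `i ≥ 1`. -/
theorem bernstein_cover_antidiagonal_trace (n : ℕ) (B : Fin (n + 2) → Set ℝ)
    (hdisj : Pairwise (Function.onFun Disjoint B))
    (hBcover : (⋃ i, B i) = Set.univ)
    (U : Fin (n + 3) → Set (ℝ × ℝ))
    (hU0 : U 0 = {p : ℝ × ℝ | p.2 < -p.1})
    (hUi : ∀ i : Fin (n + 2), U i.succ = ⋃ x ∈ B i, Set.Ici x ×ˢ Set.Ici (-x))
    (D : Set (ℝ × ℝ)) (hD : D = {p : ℝ × ℝ | ∃ x : ℝ, p = (x, -x)}) :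
    (∀ i : Fin (n + 2),
        U i.succ ⊆ {p : ℝ × ℝ | -p.1 ≤ p.2} ∧ Disjoint (U 0) (U i.succ)) ∧
    (∀ i : Fin (n + 2), U i.succ ∩ D = {p : ℝ × ℝ | ∃ x ∈ B i, p = (x, -x)}) ∧
    (∀ V : Fin (n + 3) → Set (ℝ × ℝ),
        (∀ i, V i ⊆ U i) → (⋃ i, V i) = Set.univ →
        V 0 = U 0 ∧
          ∀ i : Fin (n + 2), V i.succ ∩ D = {p : ℝ × ℝ | ∃ x ∈ B i, p = (x, -x)}) :=
  bernstein_cover_antidiagonal_trace_general n B hdisj U hU0 hUi D hD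
end
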